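/- arXiv:1111.4512 — 3 statements merged into one kernel-verified Lean document; each statement's English description precedes it below -/
import Mathlib

section
/- Let S be an amiable semigroup which avoids M, let a, b ∈ S be idempotents, and suppose there exist positive integers m, n with m > n such that (ab)^m = (ab)^n. Then ab = ba. -/
/-- The starred Green relation `𝓛*` on a semigroup `S`: `x 𝓛* y` iff for all
`u v ∈ S¹` (realized as `WithOne S`), `xu = xv ↔ yu = yv`. -/
def LStar {S : Type*} [Semigroup S] (x y : S) : Prop :=
  ∀ u v : WithOne S,
    ((x : WithOne S) * u = (x : WithOne S) * v ↔ (y : WithOne S) * u = (y : WithOne S) * v)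

/-- The starred Green relation `𝓡*` on a semigroup `S`: `x 𝓡* y` iff for all
`u v ∈ S¹` (realized as `WithOne S`), `ux = vx ↔ uy = vy`. -/
def RStar {S : Type*} [Semigroup S] (x y : S) : Prop :=
  ∀ u v : WithOne S,
    (u * (x : WithOne S) = v * (x : WithOne S) ↔ u * (y : WithOne S) = v * (y : WithOne S))

/-- A semigroup is amiable if each `𝓛*`-class and each `𝓡*`-class contains
exactly one idempotent. -/
def IsAmiable (S : Type*) [Semigroup S] : Prop :=
  (∀ x : S, ∃! e : S, e * e = e ∧ LStar x e) ∧
  (∀ x : S, ∃! e : S, e * e = e ∧ RStar x e)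

/-- A semigroup `S` avoids `M` iff it contains no four pairwise distinct elements
realizing the multiplication table of the four-element semigroup `M`. -/
def AvoidsM (S : Type*) [Semigroup S] : Prop :=
  ¬ ∃ a b c d : S,
      (a ≠ b ∧ a ≠ c ∧ a ≠ d ∧ b ≠ c ∧ b ≠ d ∧ c ≠ d) ∧
      a * a = a ∧ a * b = c ∧ a * c = c ∧ a * d = c ∧
      b * a = d ∧ b * b = b ∧ b * c = c ∧ b * d = d ∧
      c * a = c ∧ c * b = c ∧ c * c = c ∧ c * d = c ∧
      d * a = d ∧ d * b = c ∧ d * c = c ∧ d * d = c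

/-- `ABm a b n = (a*b)^(n+1)`; as `n` ranges over `ℕ` this gives the powers
`(ab)^m` for all `m ≥ 1`. -/
def ABm {S : Type*} [Mul S] (a b : S) : ℕ → S
  | 0 => a * b
  | n + 1 => (a * b) * ABm a b n

/-- `ABa a b n = (a*b)^n * a`, with the convention `(a*b)^0 * a = a`. -/
def ABa {S : Type*} [Mul S] (a b : S) : ℕ → S
  | 0 => a
  | n + 1 => (a * b) * ABa a b n

section AuxLemmas

variable {S : Type*} [Semigroup S]

/- ### Transfer lemmas for `LStar` and `RStar` -/

lemma lstar_mp {x e : S} (h : LStar x e) {c d : S} (hcd : x * c = x * d) :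
    e * c = e * d := by
  have h1 : (x : WithOne S) * (c : WithOne S) = (x : WithOne S) * (d : WithOne S) := by
    rw [← WithOne.coe_mul, ← WithOne.coe_mul, hcd]
  have h2 := (h (c : WithOne S) (d : WithOne S)).mp h1
  rw [← WithOne.coe_mul, ← WithOne.coe_mul] at h2
  exact WithOne.coe_inj.mp h2

lemma lstar_one_mp {x e : S} (h : LStar x e) {c : S} (hc : x * c = x) :
    e * c = e := by
  have h1 : (x : WithOne S) * (c : WithOne S) = (x : WithOne S) * 1 := by
    rw [mul_one, ← WithOne.coe_mul, hc]
  have h2 := (h (c : WithOne S) 1).mp h1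
  rw [mul_one, ← WithOne.coe_mul] at h2
  exact WithOne.coe_inj.mp h2

lemma lstar_one_mpr {x e : S} (h : LStar x e) {c : S} (hc : e * c = e) :
    x * c = x := by
  have h1 : (e : WithOne S) * (c : WithOne S) = (e : WithOne S) * 1 := by
    rw [mul_one, ← WithOne.coe_mul, hc]
  have h2 := (h (c : WithOne S) 1).mpr h1
  rw [mul_one, ← WithOne.coe_mul] at h2
  exact WithOne.coe_inj.mp h2

lemma rstar_mp {x e : S} (h : RStar x e) {c d : S} (hcd : c * x = d * x) :
    c * e = d * e := by
  have h1 : (c : WithOne S) * (x : WithOne S) = (d : WithOne S) * (x : WithOne S) := by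
    rw [← WithOne.coe_mul, ← WithOne.coe_mul, hcd]
  have h2 := (h (c : WithOne S) (d : WithOne S)).mp h1
  rw [← WithOne.coe_mul, ← WithOne.coe_mul] at h2
  exact WithOne.coe_inj.mp h2

lemma rstar_one_mp {x e : S} (h : RStar x e) {c : S} (hc : c * x = x) :
    c * e = e := by
  have h1 : (c : WithOne S) * (x : WithOne S) = 1 * (x : WithOne S) := by
    rw [one_mul, ← WithOne.coe_mul, hc]
  have h2 := (h (c : WithOne S) 1).mp h1
  rw [one_mul, ← WithOne.coe_mul] at h2
  exact WithOne.coe_inj.mp h2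

lemma rstar_one_mpr {x e : S} (h : RStar x e) {c : S} (hc : c * e = e) :
    c * x = x := by
  have h1 : (c : WithOne S) * (e : WithOne S) = 1 * (e : WithOne S) := by
    rw [one_mul, ← WithOne.coe_mul, hc]
  have h2 := (h (c : WithOne S) 1).mpr h1
  rw [one_mul, ← WithOne.coe_mul] at h2
  exact WithOne.coe_inj.mp h2

/- ### Absorption lemmas: in an amiable semigroup, for an idempotent `e`,
`e * c = e` implies `c * e = e` and conversely. -/

lemma absorbL (hS : IsAmiable S) {e c : S} (he : e * e = e) (hec : e * c = e) :
    c * e = e := by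
  have hce2 : (c * e) * (c * e) = c * e := by
    rw [mul_assoc, ← mul_assoc e c e, hec, he]
  have key : e * (c * e) = e := by rw [← mul_assoc, hec, he]
  have hL : LStar e (c * e) := by
    intro w w'
    constructor
    · intro h
      calc ((c * e : S) : WithOne S) * w
          = (c : WithOne S) * ((e : WithOne S) * w) := by
            simp only [WithOne.coe_mul, mul_assoc]
        _ = (c : WithOne S) * ((e : WithOne S) * w') := by rw [h]
        _ = ((c * e : S) : WithOne S) * w' := by simp only [WithOne.coe_mul, mul_assoc]
    · intro h
      calc (e : WithOne S) * w
          = ((e * (c * e) : S) : WithOne S) * w := by rw [key]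
        _ = (e : WithOne S) * (((c * e : S) : WithOne S) * w) := by
            simp only [WithOne.coe_mul, mul_assoc]
        _ = (e : WithOne S) * (((c * e : S) : WithOne S) * w') := by rw [h]
        _ = ((e * (c * e) : S) : WithOne S) * w' := by simp only [WithOne.coe_mul, mul_assoc]
        _ = (e : WithOne S) * w' := by rw [key]
  exact (hS.1 e).unique ⟨hce2, hL⟩ ⟨he, fun _ _ => Iff.rfl⟩

lemma absorbR (hS : IsAmiable S) {e c : S} (he : e * e = e) (hce : c * e = e) :
    e * c = e := by
  have hec2 : (e * c) * (e * c) = e * c := by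
    rw [mul_assoc, ← mul_assoc c e c, hce, ← mul_assoc, he]
  have key : (e * c) * e = e := by rw [mul_assoc, hce, he]
  have hR : RStar e (e * c) := by
    intro w w'
    constructor
    · intro h
      calc w * ((e * c : S) : WithOne S)
          = (w * (e : WithOne S)) * (c : WithOne S) := by
            simp only [WithOne.coe_mul, mul_assoc]
        _ = (w' * (e : WithOne S)) * (c : WithOne S) := by rw [h]
        _ = w' * ((e * c : S) : WithOne S) := by simp only [WithOne.coe_mul, mul_assoc]
    · intro h
      calc w * (e : WithOne S)
          = w * (((e * c) * e : S) : WithOne S) := by rw [key]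
        _ = (w * ((e * c : S) : WithOne S)) * (e : WithOne S) := by
            simp only [WithOne.coe_mul, ← mul_assoc]
        _ = (w' * ((e * c : S) : WithOne S)) * (e : WithOne S) := by rw [h]
        _ = w' * (((e * c) * e : S) : WithOne S) := by simp only [WithOne.coe_mul, ← mul_assoc]
        _ = w' * (e : WithOne S) := by rw [key]
  exact (hS.2 e).unique ⟨hec2, hR⟩ ⟨he, fun _ _ => Iff.rfl⟩

/- ### Basic `ABm` lemmas -/

lemma ABm_zero (x y : S) : ABm x y 0 = x * y := rfl

lemma ABm_succ (x y : S) (j : ℕ) : ABm x y (j + 1) = (x * y) * ABm x y j := rfl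

lemma ABm_succ' (x y : S) : ∀ j, ABm x y (j + 1) = ABm x y j * (x * y) := by
  intro j
  induction j with
  | zero => rfl
  | succ j ih =>
    calc ABm x y (j + 1 + 1) = (x * y) * ABm x y (j + 1) := rfl
      _ = (x * y) * (ABm x y j * (x * y)) := by rw [ih]
      _ = ((x * y) * ABm x y j) * (x * y) := (mul_assoc _ _ _).symm
      _ = ABm x y (j + 1) * (x * y) := rfl

lemma ABm_add (x y : S) (i j : ℕ) :
    ABm x y i * ABm x y j = ABm x y (i + j + 1) := by
  induction i with
  | zero =>
    rw [ABm_zero, Nat.zero_add, ABm_succ]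
  | succ i ih =>
    rw [ABm_succ x y i, mul_assoc, ih, show i + 1 + j + 1 = (i + j + 1) + 1 by omega]
    exact (ABm_succ x y (i + j + 1)).symm

lemma ABm_mul_right {x y g : S} (hg : (x * y) * g = x * y) :
    ∀ j, ABm x y j * g = ABm x y j := by
  intro j
  induction j with
  | zero => exact hg
  | succ j ih => rw [ABm_succ, mul_assoc, ih]

lemma ABm_mul_left {x y g : S} (hg : g * (x * y) = x * y) :
    ∀ j, g * ABm x y j = ABm x y j := by
  intro j
  induction j with
  | zero => exact hg
  | succ j ih => rw [ABm_succ, ← mul_assoc, hg]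

lemma ABm_stable {x y : S} {K : ℕ} (h : ABm x y (K + 1) = ABm x y K) :
    ∀ j, ABm x y (K + j) = ABm x y K := by
  intro j
  induction j with
  | zero => rfl
  | succ j ih =>
    rw [show K + (j + 1) = (K + j) + 1 from rfl, ABm_succ, ih, ← ABm_succ]
    exact h

/- ### Base case: if `ab` is idempotent then `ab = ba` -/

lemma core_one (hS : IsAmiable S) (hM : AvoidsM S) {x y : S}
    (hx : x * x = x) (hy : y * y = y) (hu : (x * y) * (x * y) = x * y) :
    x * y = y * x := by
  have huy : (x * y) * y = x * y := by rw [mul_assoc, hy]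
  have hxu : x * (x * y) = x * y := by rw [← mul_assoc, hx]
  -- `y * (x*y) = x*y` via amiability
  have hyu : y * (x * y) = x * y := by
    have hz2 : (y * (x * y)) * (y * (x * y)) = y * (x * y) := by
      rw [mul_assoc, ← mul_assoc (x*y) y (x*y), huy, hu]
    have key : (x * y) * (y * (x * y)) = x * y := by
      rw [← mul_assoc, huy, hu]
    have hzL : LStar (x * y) (y * (x * y)) := by
      intro w w'
      constructor
      · intro h
        calc ((y * (x * y) : S) : WithOne S) * w
            = (y : WithOne S) * (((x * y : S) : WithOne S) * w) := by
              simp only [WithOne.coe_mul, mul_assoc]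
          _ = (y : WithOne S) * (((x * y : S) : WithOne S) * w') := by rw [h]
          _ = ((y * (x * y) : S) : WithOne S) * w' := by simp only [WithOne.coe_mul, mul_assoc]
      · intro h
        calc ((x * y : S) : WithOne S) * w
            = (((x * y) * (y * (x * y)) : S) : WithOne S) * w := by rw [key]
          _ = ((x * y : S) : WithOne S) * (((y * (x * y) : S) : WithOne S) * w) := by
              simp only [WithOne.coe_mul, mul_assoc]
          _ = ((x * y : S) : WithOne S) * (((y * (x * y) : S) : WithOne S) * w') := by rw [h]
          _ = (((x * y) * (y * (x * y)) : S) : WithOne S) * w' := by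
              simp only [WithOne.coe_mul, mul_assoc]
          _ = ((x * y : S) : WithOne S) * w' := by rw [key]
    exact (hS.1 (x * y)).unique ⟨hz2, hzL⟩ ⟨hu, fun _ _ => Iff.rfl⟩
  -- `(x*y) * x = x*y` via amiability
  have hux : (x * y) * x = x * y := by
    have hz2 : ((x * y) * x) * ((x * y) * x) = (x * y) * x := by
      rw [mul_assoc, ← mul_assoc x (x*y) x, hxu, ← mul_assoc, hu]
    have key : ((x * y) * x) * (x * y) = x * y := by
      rw [mul_assoc, hxu, hu]
    have hzR : RStar (x * y) ((x * y) * x) := by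
      intro w w'
      constructor
      · intro h
        calc w * (((x * y) * x : S) : WithOne S)
            = (w * ((x * y : S) : WithOne S)) * (x : WithOne S) := by
              simp only [WithOne.coe_mul, mul_assoc]
          _ = (w' * ((x * y : S) : WithOne S)) * (x : WithOne S) := by rw [h]
          _ = w' * (((x * y) * x : S) : WithOne S) := by simp only [WithOne.coe_mul, mul_assoc]
      · intro h
        calc w * ((x * y : S) : WithOne S)
            = w * ((((x * y) * x) * (x * y) : S) : WithOne S) := by rw [key]
          _ = (w * (((x * y) * x : S) : WithOne S)) * ((x * y : S) : WithOne S) := by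
              simp only [WithOne.coe_mul, mul_assoc]
          _ = (w' * (((x * y) * x : S) : WithOne S)) * ((x * y : S) : WithOne S) := by
              rw [h]
          _ = w' * ((((x * y) * x) * (x * y) : S) : WithOne S) := by
              simp only [WithOne.coe_mul, mul_assoc]
          _ = w' * ((x * y : S) : WithOne S) := by rw [key]
    exact (hS.2 (x * y)).unique ⟨hz2, hzR⟩ ⟨hu, fun _ _ => Iff.rfl⟩
  have Tdd : (y * x) * (y * x) = x * y := by
    rw [mul_assoc, ← mul_assoc x y x, hux]
    exact hyu
  by_cases h1 : x = y
  · rw [h1]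
  by_cases h2 : x = x * y
  · have h' : y * x = y * (x * y) := by rw [← h2]
    rw [h', hyu]
  by_cases h3 : x = y * x
  · have hxy' : x * y = x := by
      calc x * y = (y * x) * (y * x) := Tdd.symm
        _ = x * x := by rw [← h3]
        _ = x := hx
    rw [hxy']
    exact h3
  by_cases h4 : y = x * y
  · have h' : y * x = (x * y) * x := by rw [← h4]
    rw [h', hux]
  by_cases h5 : y = y * x
  · have hxy' : x * y = y := by
      calc x * y = (y * x) * (y * x) := Tdd.symm
        _ = y * y := by rw [← h5]
        _ = y := hy
    rw [hxy']
    exact h5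
  by_cases h6 : x * y = y * x
  · exact h6
  exfalso
  exact hM ⟨x, y, x * y, y * x, ⟨h1, h2, h3, h4, h5, h6⟩,
    hx, rfl, hxu, (by rw [← mul_assoc]; exact hux),
    rfl, hy, hyu, (by rw [← mul_assoc, hy]),
    hux, huy, hu, (by rw [← mul_assoc, mul_assoc x y y, hy]; exact hux),
    (by rw [mul_assoc, hx]), (by rw [mul_assoc]; exact hyu),
    (by rw [mul_assoc, ← mul_assoc x x y, hx]; exact hyu), Tdd⟩

/- ### Main induction: if `(xy)^(k+2) = (xy)^(k+1)` then `xy = yx` -/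

lemma core (hS : IsAmiable S) (hM : AvoidsM S) :
    ∀ (k : ℕ) (x y : S), x * x = x → y * y = y →
      ABm x y (k + 1) = ABm x y k → x * y = y * x := by
  intro k
  induction k with
  | zero =>
    intro x y hx hy h
    exact core_one hS hM hx hy h
  | succ k IH =>
    intro x y hx hy h
    -- h : ABm x y (k+2) = ABm x y (k+1);  write e := ABm x y (k+1) = (xy)^(k+2)
    obtain ⟨eL, ⟨heL2, heLL⟩, -⟩ := hS.1 (x * y)
    obtain ⟨eR, ⟨heR2, heRR⟩, -⟩ := hS.2 (x * y)
    have huy : (x * y) * y = x * y := by rw [mul_assoc, hy]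
    have hxu : x * (x * y) = x * y := by rw [← mul_assoc, hx]
    have hueL : (x * y) * eL = x * y := lstar_one_mpr heLL heL2
    have heLy : eL * y = eL := lstar_one_mp heLL huy
    have hyeL : y * eL = eL := absorbL hS heL2 heLy
    have heRu : eR * (x * y) = x * y := rstar_one_mpr heRR heR2
    have hxeR : x * eR = eR := rstar_one_mp heRR hxu
    have heRx : eR * x = eR := absorbR hS heR2 hxeR
    have heRy : eR * y = x * y := by
      rw [← heRu, ← mul_assoc, heRx]
    have heRL : eR * eL = x * y := by
      rw [← hyeL, ← mul_assoc, heRy]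
      exact hueL
    -- idempotency of e := ABm x y (k+1)
    have hstab : ∀ j, ABm x y (k + 1 + j) = ABm x y (k + 1) := ABm_stable h
    have he : ABm x y (k + 1) * ABm x y (k + 1) = ABm x y (k + 1) := by
      rw [ABm_add, show (k + 1) + (k + 1) + 1 = (k + 1) + (k + 2) by omega]
      exact hstab (k + 2)
    have heeL : ABm x y (k + 1) * eL = ABm x y (k + 1) := ABm_mul_right hueL (k + 1)
    have heLe : eL * ABm x y (k + 1) = ABm x y (k + 1) := absorbL hS he heeL
    have heRe : eR * ABm x y (k + 1) = ABm x y (k + 1) := ABm_mul_left heRu (k + 1)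
    have heeR : ABm x y (k + 1) * eR = ABm x y (k + 1) := absorbR hS he heRe
    have hue : (x * y) * ABm x y (k + 1) = ABm x y (k + 1) := by
      rw [← ABm_succ]; exact h
    have heu : ABm x y (k + 1) * (x * y) = ABm x y (k + 1) := by
      rw [← ABm_succ']; exact h
    have KEY1 : eL * ABm x y k = ABm x y (k + 1) := by
      have h1 : (x * y) * ABm x y k = (x * y) * ABm x y (k + 1) := by
        rw [← ABm_succ, ← ABm_succ, h]
      have h2 := lstar_mp heLL h1
      rw [heLe] at h2
      exact h2
    have KEY2 : ABm x y k * eR = ABm x y (k + 1) := by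
      have h1 : ABm x y k * (x * y) = ABm x y (k + 1) * (x * y) := by
        rw [← ABm_succ', ← ABm_succ', h]
      have h2 := rstar_mp heRR h1
      rw [heeR] at h2
      exact h2
    -- powers of P := eL * eR
    have PABm : ∀ i, ABm eL eR (i + 1) = (eL * ABm x y i) * eR := by
      intro i
      induction i with
      | zero =>
        show (eL * eR) * (eL * eR) = (eL * (x * y)) * eR
        rw [← heRL]
        simp only [mul_assoc]
      | succ i ih =>
        rw [ABm_succ eL eR (i + 1), ih, ABm_succ x y i, ← heRL]
        simp only [mul_assoc]
    have hP : ABm eL eR (k + 1) = ABm eL eR k := by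
      cases k with
      | zero =>
        have hA : (x * y) * eR = ABm x y 1 := KEY2
        have hB : (x * y) * ABm x y 1 = ABm x y 1 := hue
        have h1 : (x * y) * eR = (x * y) * ABm x y 1 := hA.trans hB.symm
        have hPe : eL * eR = ABm x y 1 := by
          have h2 := lstar_mp heLL h1
          rw [heLe] at h2
          exact h2
        show (eL * eR) * (eL * eR) = eL * eR
        rw [hPe]
        exact he
      | succ j =>
        have hL : ABm eL eR (j + 2) = ABm x y (j + 2) := by
          rw [PABm (j + 1), KEY1]
          exact heeR
        have hR : ABm eL eR (j + 1) = ABm x y (j + 2) := by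
          rw [PABm j]
          have h1 : (eL * ABm x y j) * (x * y) = ABm x y (j + 2) * (x * y) := by
            rw [mul_assoc, ← ABm_succ', KEY1, heu]
          have h2 := rstar_mp heRR h1
          rw [heeR] at h2
          exact h2
        rw [hL, hR]
    have hcomm : eL * eR = eR * eL := IH eL eR heL2 heR2 hP
    have heLu : eL * (x * y) = x * y := by
      rw [← heRL, ← mul_assoc, hcomm, mul_assoc, heL2]
    have heLj : ∀ j, eL * ABm x y j = ABm x y j := ABm_mul_left heLu
    have hfin : ABm x y (k + 1) = ABm x y k := by
      rw [← heLj k, KEY1]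
    exact IH x y hx hy hfin

end AuxLemmas

/-- In an amiable semigroup avoiding `M`, if `a, b` are idempotents and
`(ab)^M = (ab)^N` for some positive integers `M = m+1 > N = n+1`, then `ab = ba`.
(Here `ABm a b k = (ab)^(k+1)`.) -/
theorem ab_comm_of_pow_eq_pow {S : Type*} [Semigroup S] (hS : IsAmiable S) (hM : AvoidsM S)
    (a b : S) (ha : a * a = a) (hb : b * b = b) (m n : ℕ) (hmn : n < m)
    (h : ABm a b m = ABm a b n) :
    a * b = b * a := by
  set p := m - n with hp_def
  have hp : 0 < p := by omega
  have hm' : n + p = m := by omega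
  -- periodicity with period p, from index n on
  have key : ∀ d, ABm a b (n + d + p) = ABm a b (n + d) := by
    intro d
    induction d with
    | zero =>
      rw [Nat.add_zero, hm']
      exact h
    | succ d ih =>
      rw [show n + (d + 1) + p = (n + d + p) + 1 by omega, ABm_succ, ih,
        show n + (d + 1) = (n + d) + 1 from rfl, ABm_succ]
  have key2 : ∀ t d, ABm a b (n + d + t * p) = ABm a b (n + d) := by
    intro t
    induction t with
    | zero => intro d; rw [Nat.zero_mul, Nat.add_zero]
    | succ t ih =>
      intro d
      rw [show n + d + (t + 1) * p = (n + (d + t * p)) + p by ring, key (d + t * p),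
        show n + (d + t * p) = n + d + t * p by ring, ih d]
  -- choose i with i ≥ n and i + 1 = (n+1) * p, so that ABm a b i is idempotent
  have hq : n + 1 ≤ (n + 1) * p := by
    calc n + 1 = (n + 1) * 1 := (Nat.mul_one _).symm
      _ ≤ (n + 1) * p := Nat.mul_le_mul_left (n + 1) hp
  set i := (n + 1) * p - 1 with hi_def
  have hi : i + 1 = (n + 1) * p := Nat.sub_add_cancel (le_trans (by omega) hq)
  have hin : n ≤ i := by
    have h2 := hq
    rw [← hi] at h2
    omega
  have he : ABm a b i * ABm a b i = ABm a b i := by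
    rw [ABm_add]
    have e1 : i + i + 1 = n + (i - n) + (n + 1) * p := by
      rw [← hi]
      omega
    rw [e1, key2 (n + 1) (i - n), show n + (i - n) = i by omega]
  have hae : a * ABm a b i = ABm a b i :=
    ABm_mul_left (by rw [← mul_assoc, ha]) i
  have hea : ABm a b i * a = ABm a b i := absorbR hS he hae
  have heb : ABm a b i * b = ABm a b i :=
    ABm_mul_right (by rw [mul_assoc, hb]) i
  have hstep : ABm a b (i + 1) = ABm a b i := by
    rw [ABm_succ', ← mul_assoc, hea]
    exact heb
  exact core hS hM i a b ha hb hstep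
end

section
/- Let S be an amiable semigroup which avoids M and let a, b ∈ S be idempotents with ab ≠ ba. Then the elements (ab)^m (m ≥ 1), (ba)^m (m ≥ 1), (ab)^n a (n ≥ 0, with (ab)^0 a = a), and (ba)^n b (n ≥ 0, with (ba)^0 b = b) are all pairwise distinct. Consequently the subsemigroup of S generated by a and b is infinite and is isomorphic to the semigroup F presented by ⟨a, b | a² = a, b² = b⟩. -/
/-- The elements `(ab)^m, (ba)^m (m ≥ 1)` and `(ab)^n a, (ba)^n b (n ≥ 0)`
are pairwise distinct. -/
def PairwiseDistinctF {S : Type*} [Mul S] (a b : S) : Prop :=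
  Function.Injective (ABm a b) ∧ Function.Injective (ABm b a) ∧
  Function.Injective (ABa a b) ∧ Function.Injective (ABa b a) ∧
  (∀ m n, ABm a b m ≠ ABm b a n) ∧ (∀ m n, ABm a b m ≠ ABa a b n) ∧
  (∀ m n, ABm a b m ≠ ABa b a n) ∧ (∀ m n, ABm b a m ≠ ABa a b n) ∧
  (∀ m n, ABm b a m ≠ ABa b a n) ∧ (∀ m n, ABa a b m ≠ ABa b a n)

/-- The defining relations of the presentation `⟨a, b ∣ a² = a, b² = b⟩`. -/
def FRel : FreeSemigroup (Fin 2) → FreeSemigroup (Fin 2) → Prop := fun x y =>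
  (x = FreeSemigroup.of 0 * FreeSemigroup.of 0 ∧ y = FreeSemigroup.of 0) ∨
  (x = FreeSemigroup.of 1 * FreeSemigroup.of 1 ∧ y = FreeSemigroup.of 1)

/-- The semigroup `F` presented by `⟨a, b ∣ a² = a, b² = b⟩`. -/
def FSemigroup : Type := (conGen FRel).Quotient

instance : Semigroup FSemigroup := inferInstanceAs (Semigroup (conGen FRel).Quotient)

/-!
If a power `e = (ab)^(n+1)` is idempotent, amiability makes `e` a two-sided zero for `a` and `b`.
Suppose further that `u` ends with one generator `q` and that `u p = e` for the other one `p`, and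
let `η` be the idempotent in the `𝓛*`-class of `u`. Then `η, p, e, pη` satisfy the table of `M`,
so two of them coincide, and every such coincidence forces `u = e`. Applied to `u = (ab)^n a` and
then to `u = (ab)^n`, this makes `(ab)^n` idempotent as well. Descending to `ab`, the elements
`a, b, ab, ba` satisfy the table of `M`, and every coincidence among them contradicts `ab ≠ ba`.
So no power of `ab` is idempotent, hence the powers of `ab` are pairwise distinct, and multiplying
by `a` and `b` separates the four families. These families are stable under left multiplication by
the generators, so they exhaust `F`, and the canonical map `F → ⟨a, b⟩` is an isomorphism.
-/

section Green

variable {S : Type*} [Semigroup S] {x y e f : S}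

theorem LStar.refl (x : S) : LStar x x := fun _ _ => Iff.rfl

theorem RStar.refl (x : S) : RStar x x := fun _ _ => Iff.rfl

theorem LStar.mul_eq_mul_iff (h : LStar x y) (u v : S) : x * u = x * v ↔ y * u = y * v := by
  simpa only [← WithOne.coe_mul, WithOne.coe_inj] using h u v

theorem LStar.mul_eq_self_iff (h : LStar x y) (u : S) : x * u = x ↔ y * u = y := by
  simpa only [mul_one, ← WithOne.coe_mul, WithOne.coe_inj] using h u 1

theorem lstar_of_mul_eq (hxy : x * y = x) (hyx : y * x = y) : LStar x y := by
  refine fun u v => ⟨fun h => ?_, fun h => ?_⟩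
  · rw [← hyx, WithOne.coe_mul, mul_assoc, h, ← mul_assoc]
  · rw [← hxy, WithOne.coe_mul, mul_assoc, h, ← mul_assoc]

theorem rstar_of_mul_eq (hxy : x * y = y) (hyx : y * x = x) : RStar x y := by
  refine fun u v => ⟨fun h => ?_, fun h => ?_⟩
  · rw [← hxy, WithOne.coe_mul, ← mul_assoc, h, mul_assoc]
  · rw [← hyx, WithOne.coe_mul, ← mul_assoc, h, mul_assoc]

namespace IsAmiable

variable (hS : IsAmiable S)
include hS

theorem eq_of_lstar (he : IsIdempotentElem e) (hf : IsIdempotentElem f) (h : LStar e f) :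
    e = f := by
  obtain ⟨g, -, hg⟩ := hS.1 e
  exact (hg e ⟨he, LStar.refl e⟩).trans (hg f ⟨hf, h⟩).symm

theorem eq_of_rstar (he : IsIdempotentElem e) (hf : IsIdempotentElem f) (h : RStar e f) :
    e = f := by
  obtain ⟨g, -, hg⟩ := hS.2 e
  exact (hg e ⟨he, RStar.refl e⟩).trans (hg f ⟨hf, h⟩).symm

theorem mul_eq_self_iff (he : IsIdempotentElem e) : e * x = e ↔ x * e = e := by
  constructor
  · intro hex
    have hidem : IsIdempotentElem (x * e) := by
      rw [IsIdempotentElem, mul_assoc, ← mul_assoc e, hex, he.eq]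
    refine (hS.eq_of_lstar he hidem (lstar_of_mul_eq ?_ ?_)).symm
    · rw [← mul_assoc, hex, he.eq]
    · rw [mul_assoc, he.eq]
  · intro hxe
    have hidem : IsIdempotentElem (e * x) := by
      rw [IsIdempotentElem, mul_assoc, ← mul_assoc x, hxe, ← mul_assoc, he.eq]
    refine (hS.eq_of_rstar he hidem (rstar_of_mul_eq ?_ ?_)).symm
    · rw [← mul_assoc, he.eq]
    · rw [mul_assoc, hxe, he.eq]

end IsAmiable

end Green

section Absorb

variable {S : Type*} [Semigroup S] {a b e : S}

def absorbedBy (e : S) : Subsemigroup S where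
  carrier := {x | x * e = e ∧ e * x = e}
  mul_mem' {x y} hx hy := ⟨by rw [mul_assoc, hy.1, hx.1], by rw [← mul_assoc, hx.2, hy.2]⟩

theorem ne_of_mem_absorbedBy (hne : a * b ≠ b * a) (hb : b ∈ absorbedBy e) : a ≠ e := by
  rintro rfl
  exact hne (hb.2.trans hb.1.symm)

theorem AvoidsM.degenerate (hM : AvoidsM S) {p q : S} (hp : IsIdempotentElem p)
    (hq : IsIdempotentElem q) (he : IsIdempotentElem e) (hpq : p * q = e)
    (hpe : p ∈ absorbedBy e) (hqe : q ∈ absorbedBy e) :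
    p = q ∨ p = e ∨ p = q * p ∨ q = e ∨ q = q * p ∨ e = q * p := by
  by_contra! h
  exact hM ⟨p, q, e, q * p, h, hp, hpq, hpe.1, by rw [← mul_assoc, hpq, hpe.2],
    rfl, hq, hqe.1, by rw [← mul_assoc, hq.eq],
    hpe.2, hqe.2, he, by rw [← mul_assoc, hqe.2, hpe.2],
    by rw [mul_assoc, hp.eq], by rw [mul_assoc, hpq, hqe.1], by rw [mul_assoc, hpe.1, hqe.1],
    by rw [mul_assoc, ← mul_assoc p, hpq, hpe.2, hqe.1]⟩

end Absorb

section Words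

variable {S : Type*} [Semigroup S] {a b : S}

theorem ABm_mul_a (n : ℕ) : ABm a b n * a = ABa a b (n + 1) := by
  induction n with
  | zero => rfl
  | succ n ih => rw [ABm, mul_assoc, ih]; rfl

theorem ABa_mul_b (n : ℕ) : ABa a b n * b = ABm a b n := by
  induction n with
  | zero => rfl
  | succ n ih => rw [ABa, mul_assoc, ih]; rfl

theorem b_mul_ABa (n : ℕ) : b * ABa a b n = ABm b a n := by
  induction n with
  | zero => rfl
  | succ n ih => rw [ABa, ABm, ← ih]; simp only [mul_assoc]

theorem b_mul_ABm (n : ℕ) : b * ABm a b n = ABa b a (n + 1) := by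
  rw [← ABa_mul_b, ← mul_assoc, b_mul_ABa, ABm_mul_a]

theorem a_mul_ABm (ha : IsIdempotentElem a) (n : ℕ) : a * ABm a b n = ABm a b n := by
  cases n <;> simp only [ABm, ← mul_assoc, ha.eq]

theorem a_mul_ABa (ha : IsIdempotentElem a) (n : ℕ) : a * ABa a b n = ABa a b n := by
  cases n <;> simp only [ABa, ← mul_assoc, ha.eq]

theorem ABm_mul_b (hb : IsIdempotentElem b) (n : ℕ) : ABm a b n * b = ABm a b n := by
  rw [← ABa_mul_b, mul_assoc, hb.eq]

theorem ABa_mul_a (ha : IsIdempotentElem a) (n : ℕ) : ABa a b n * a = ABa a b n := by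
  cases n with
  | zero => exact ha
  | succ n => rw [← ABm_mul_a, mul_assoc, ha.eq]

theorem ABm_mem {A : Type*} [SetLike A S] [MulMemClass A S] {s : A} (ha : a ∈ s) (hb : b ∈ s)
    (n : ℕ) : ABm a b n ∈ s := by
  induction n with
  | zero => exact mul_mem ha hb
  | succ n ih => exact mul_mem (mul_mem ha hb) ih

theorem ABa_mem {A : Type*} [SetLike A S] [MulMemClass A S] {s : A} (ha : a ∈ s) (hb : b ∈ s)
    (n : ℕ) : ABa a b n ∈ s := by
  cases n with
  | zero => exact ha
  | succ n => rw [← ABm_mul_a]; exact mul_mem (ABm_mem ha hb n) ha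

theorem coe_ABm (n : ℕ) :
    ((ABm a b n : S) : WithOne S) = ((a * b : S) : WithOne S) ^ (n + 1) := by
  induction n with
  | zero => rw [pow_one]; rfl
  | succ n ih => rw [ABm, WithOne.coe_mul, ih, ← pow_succ']

theorem map_ABm {T F : Type*} [Semigroup T] [FunLike F S T] [MulHomClass F S T] (f : F) (n : ℕ) :
    f (ABm a b n) = ABm (f a) (f b) n := by
  induction n with
  | zero => exact map_mul f a b
  | succ n ih => rw [ABm, ABm, map_mul, map_mul, ih]

theorem map_ABa {T F : Type*} [Semigroup T] [FunLike F S T] [MulHomClass F S T] (f : F) (n : ℕ) :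
    f (ABa a b n) = ABa (f a) (f b) n := by
  induction n with
  | zero => rfl
  | succ n ih => rw [ABa, ABa, map_mul, map_mul, ih]

end Words

theorem exists_isIdempotentElem_pow_of_pow_eq_pow {M : Type*} [Monoid M] {x : M} {m n : ℕ}
    (hmn : m ≠ n) (h : x ^ m = x ^ n) : ∃ k ≠ 0, IsIdempotentElem (x ^ k) := by
  wlog hlt : m < n generalizing m n
  · exact this (Ne.symm hmn) h.symm (by omega)
  obtain ⟨d, rfl⟩ := Nat.exists_eq_add_of_lt hlt
  have hshift : ∀ i, m ≤ i → x ^ (i + (d + 1)) = x ^ i := by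
    intro i hi
    obtain ⟨r, rfl⟩ := Nat.exists_eq_add_of_le hi
    rw [add_right_comm, pow_add, ← add_assoc, ← h, ← pow_add]
  have hiter : ∀ j i, m ≤ i → x ^ (i + j * (d + 1)) = x ^ i := by
    intro j
    induction j with
    | zero => simp
    | succ j ih =>
      intro i hi
      rw [add_one_mul, ← add_assoc, hshift _ (by omega), ih i hi]
  refine ⟨(m + 1) * (d + 1), by positivity, ?_⟩
  rw [IsIdempotentElem, ← pow_add]
  exact hiter (m + 1) _ (by nlinarith)

namespace IsAmiable

variable {S : Type*} [Semigroup S] (hS : IsAmiable S) {a b : S}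
include hS

theorem mem_absorbedBy_of_isIdempotentElem_ABm (ha : IsIdempotentElem a)
    (hb : IsIdempotentElem b) {n : ℕ} (he : IsIdempotentElem (ABm a b n)) :
    a ∈ absorbedBy (ABm a b n) ∧ b ∈ absorbedBy (ABm a b n) :=
  ⟨⟨a_mul_ABm ha n, (hS.mul_eq_self_iff he).2 (a_mul_ABm ha n)⟩,
    ⟨(hS.mul_eq_self_iff he).1 (ABm_mul_b hb n), ABm_mul_b hb n⟩⟩

variable (hM : AvoidsM S)
include hM

theorem mul_eq_of_mul_mul_eq {e p q v : S} (he : IsIdempotentElem e) (hp : IsIdempotentElem p)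
    (hq : IsIdempotentElem q) (hpe : p ∈ absorbedBy e) (hpne : p ≠ e) (hvp : v * p = v)
    (hve : v * e = e) (hev : e * (v * q) = e) (h : v * q * p = e) : v * q = e := by
  obtain ⟨η, ⟨hη, hL⟩, -⟩ := hS.1 (v * q)
  have hη : IsIdempotentElem η := hη
  have huη : v * q * η = v * q := (hL.mul_eq_self_iff η).2 hη
  have hηq : η * q = η := (hL.mul_eq_self_iff q).1 (by rw [mul_assoc, hq.eq])
  have hqη : q * η = η := (hS.mul_eq_self_iff hη).1 hηq
  have hue : v * q * e = e := by
    calc v * q * e = v * q * p * e := by rw [mul_assoc (v * q), hpe.1]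
      _ = e := by rw [h, he.eq]
  have heη : e * η = e := by rw [← hev, mul_assoc, huη]
  have hηe : η * e = e := (hS.mul_eq_self_iff he).1 heη
  have hηp : η * p = e := hηe ▸ (hL.mul_eq_mul_iff p e).1 (h.trans hue.symm)
  rcases hM.degenerate hη hp he hηp ⟨hηe, heη⟩ hpe with h' | h' | h' | h' | h' | h'
  · rw [← huη, h', h]
  · rw [← huη, h', hue]
  · rw [← huη, h', ← mul_assoc, h, heη]
  · exact absurd h' hpne
  · refine absurd ?_ hpne
    calc p = p * η * p := by rw [← h', hp.eq]
      _ = e := by rw [mul_assoc, hηp, hpe.1]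
  · calc v * q = v * η := by rw [← huη, mul_assoc, hqη]
      _ = e := by rw [← hvp, mul_assoc, ← h', hve]

theorem ABm_eq_ABm_succ (ha : IsIdempotentElem a) (hb : IsIdempotentElem b)
    (hne : a * b ≠ b * a) {n : ℕ} (he : IsIdempotentElem (ABm a b (n + 1))) :
    ABm a b n = ABm a b (n + 1) := by
  obtain ⟨haE, hbE⟩ := hS.mem_absorbedBy_of_isIdempotentElem_ABm ha hb he
  have hABa : ABa a b (n + 1) = ABm a b (n + 1) := by
    rw [← ABm_mul_a]
    refine hS.mul_eq_of_mul_mul_eq hM he hb ha hbE (ne_of_mem_absorbedBy hne.symm haE)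
      (ABm_mul_b hb n) (ABm_mem haE hbE n).1 ?_ (by rw [ABm_mul_a, ABa_mul_b])
    rw [ABm_mul_a]
    exact (ABa_mem haE hbE _).2
  rw [← ABa_mul_b]
  refine hS.mul_eq_of_mul_mul_eq hM he ha hb haE (ne_of_mem_absorbedBy hne hbE)
    (ABa_mul_a ha n) (ABa_mem haE hbE n).1 ?_ (by rw [ABa_mul_b, ABm_mul_a, hABa])
  rw [ABa_mul_b]
  exact (ABm_mem haE hbE n).2

theorem not_isIdempotentElem_mul (ha : IsIdempotentElem a) (hb : IsIdempotentElem b)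
    (hne : a * b ≠ b * a) : ¬ IsIdempotentElem (a * b) := by
  intro he
  obtain ⟨haE, hbE⟩ : a ∈ absorbedBy (a * b) ∧ b ∈ absorbedBy (a * b) :=
    hS.mem_absorbedBy_of_isIdempotentElem_ABm ha hb (n := 0) he
  have ha_ne : a ≠ a * b := ne_of_mem_absorbedBy hne hbE
  have hb_ne : b ≠ a * b := ne_of_mem_absorbedBy hne.symm haE
  rcases hM.degenerate ha hb he rfl haE hbE with h | h | h | h | h | h
  · exact hne (by rw [h])
  · exact ha_ne h
  · refine ha_ne ?_
    calc a = a * (b * a) := by rw [← h, ha.eq]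
      _ = a * b := by rw [← mul_assoc, haE.2]
  · exact hb_ne h
  · refine hb_ne ?_
    calc b = b * a * b := by rw [← h, hb.eq]
      _ = a * b := by rw [mul_assoc, hbE.1]
  · exact hne h

theorem not_isIdempotentElem_ABm (ha : IsIdempotentElem a) (hb : IsIdempotentElem b)
    (hne : a * b ≠ b * a) (n : ℕ) : ¬ IsIdempotentElem (ABm a b n) := by
  induction n with
  | zero => exact hS.not_isIdempotentElem_mul hM ha hb hne
  | succ n ih => exact fun he => ih (by rwa [hS.ABm_eq_ABm_succ hM ha hb hne he])

theorem ABm_injective (ha : IsIdempotentElem a) (hb : IsIdempotentElem b)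
    (hne : a * b ≠ b * a) : Function.Injective (ABm a b) := by
  intro m n h
  by_contra hmn
  obtain ⟨k, hk, hidem⟩ := exists_isIdempotentElem_pow_of_pow_eq_pow
    (x := ((a * b : S) : WithOne S)) (by omega : m + 1 ≠ n + 1) (by rw [← coe_ABm, ← coe_ABm, h])
  obtain ⟨t, rfl⟩ := Nat.exists_eq_succ_of_ne_zero hk
  rw [IsIdempotentElem, ← coe_ABm, ← WithOne.coe_mul, WithOne.coe_inj] at hidem
  exact hS.not_isIdempotentElem_ABm hM ha hb hne t hidem

end IsAmiable

section Distinct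

open Function

variable {S : Type*} [Semigroup S] {a b : S}

theorem ABa_injective (h : Injective (ABm a b)) : Injective (ABa a b) :=
  fun m n hmn => h (by rw [← ABa_mul_b, hmn, ABa_mul_b])

variable (ha : IsIdempotentElem a) (hb : IsIdempotentElem b)
include ha hb

theorem ABm_ne_ABa (h : Injective (ABm a b)) (m n : ℕ) : ABm a b m ≠ ABa a b n := by
  intro hmn
  obtain rfl : m = n := h (by rw [← ABm_mul_b hb m, hmn, ABa_mul_b])
  exact (ABa_injective h).ne m.succ_ne_self (by rw [← ABm_mul_a, hmn, ABa_mul_a ha])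

theorem ABm_ne_ABa_swap (hab : Injective (ABm a b)) (hba : Injective (ABm b a)) (m n : ℕ) :
    ABm a b m ≠ ABa b a n := by
  intro hmn
  obtain rfl : m = n := hab (by rw [← a_mul_ABm ha m, hmn, b_mul_ABa])
  exact (ABa_injective hba).ne m.succ_ne_self (by rw [← b_mul_ABm, hmn, a_mul_ABa hb])

theorem ABm_ne_ABm_swap (hab : Injective (ABm a b)) (m n : ℕ) : ABm a b m ≠ ABm b a n :=
  fun hmn => ABm_ne_ABa ha hb hab m (n + 1) (by rw [← a_mul_ABm ha m, hmn, b_mul_ABm])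

theorem ABa_ne_ABa_swap (hab : Injective (ABm a b)) (hba : Injective (ABm b a)) (m n : ℕ) :
    ABa a b m ≠ ABa b a n :=
  fun hmn => ABm_ne_ABa_swap ha hb hab hba m n (by rw [← ABa_mul_b, hmn, ABa_mul_a hb])

theorem pairwiseDistinctF_of_injective (hab : Injective (ABm a b)) (hba : Injective (ABm b a)) :
    PairwiseDistinctF a b :=
  ⟨hab, hba, ABa_injective hab, ABa_injective hba, ABm_ne_ABm_swap ha hb hab,
    ABm_ne_ABa ha hb hab, ABm_ne_ABa_swap ha hb hab hba, ABm_ne_ABa_swap hb ha hba hab,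
    ABm_ne_ABa hb ha hba, ABa_ne_ABa_swap ha hb hab hba⟩

end Distinct

section AltProd

open Function

variable {S : Type*} [Semigroup S] {a b : S}

def altProd (a b : S) : (ℕ ⊕ ℕ) ⊕ (ℕ ⊕ ℕ) → S :=
  Sum.elim (Sum.elim (ABm a b) (ABm b a)) (Sum.elim (ABa a b) (ABa b a))

theorem PairwiseDistinctF.injective_altProd (h : PairwiseDistinctF a b) :
    Injective (altProd a b) := by
  obtain ⟨i₁, i₂, i₃, i₄, d₁, d₂, d₃, d₄, d₅, d₆⟩ := h
  refine (i₁.sumElim i₂ d₁).sumElim (i₃.sumElim i₄ d₆) ?_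
  rintro (m | m) (n | n)
  exacts [d₂ m n, d₃ m n, d₄ m n, d₅ m n]

theorem altProd_swap (a b : S) (i : (ℕ ⊕ ℕ) ⊕ (ℕ ⊕ ℕ)) :
    altProd b a i = altProd a b (i.map Sum.swap Sum.swap) := by
  rcases i with (n | n) | (n | n) <;> rfl

theorem map_altProd {T F : Type*} [Semigroup T] [FunLike F S T] [MulHomClass F S T] (f : F)
    (i : (ℕ ⊕ ℕ) ⊕ (ℕ ⊕ ℕ)) : f (altProd a b i) = altProd (f a) (f b) i := by
  rcases i with (n | n) | (n | n) <;>
    simp only [altProd, Sum.elim_inl, Sum.elim_inr, map_ABm, map_ABa]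

theorem mul_altProd_mem_range (ha : IsIdempotentElem a) (i : (ℕ ⊕ ℕ) ⊕ (ℕ ⊕ ℕ)) :
    a * altProd a b i ∈ Set.range (altProd a b) := by
  rcases i with (n | n) | (n | n)
  exacts [⟨.inl (.inl n), (a_mul_ABm ha n).symm⟩, ⟨.inr (.inl (n + 1)), (b_mul_ABm n).symm⟩,
    ⟨.inr (.inl n), (a_mul_ABa ha n).symm⟩, ⟨.inl (.inl n), (b_mul_ABa n).symm⟩]

theorem closure_subset_range_altProd (ha : IsIdempotentElem a) (hb : IsIdempotentElem b) :
    (Subsemigroup.closure {a, b} : Set S) ⊆ Set.range (altProd a b) := by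
  have hgen : ∀ x ∈ ({a, b} : Set S), ∀ r ∈ Set.range (altProd a b),
      x * r ∈ Set.range (altProd a b) := by
    rintro x hx _ ⟨i, rfl⟩
    rcases hx with rfl | hx
    · exact mul_altProd_mem_range ha i
    · obtain ⟨j, hj⟩ := mul_altProd_mem_range hb (i.map Sum.swap Sum.swap)
      exact ⟨j.map Sum.swap Sum.swap, by rw [hx, ← altProd_swap, hj, ← altProd_swap]⟩
  -- The invariant includes stability under left multiplication, so that only products with a
  -- generator on the left have to be computed.
  intro x hx
  refine (Subsemigroup.closure_induction (p := fun x _ => x ∈ Set.range (altProd a b) ∧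
    ∀ r ∈ Set.range (altProd a b), x * r ∈ Set.range (altProd a b)) ?_ ?_ hx).1
  · intro x hx
    refine ⟨?_, hgen x hx⟩
    rcases hx with rfl | rfl
    exacts [⟨.inr (.inl 0), rfl⟩, ⟨.inr (.inr 0), rfl⟩]
  · rintro x y - - ⟨-, hx⟩ ⟨hy, hy'⟩
    exact ⟨hx y hy, fun r hr => mul_assoc x y r ▸ hx _ (hy' r hr)⟩

theorem infinite_closure_of_injective (h : Injective (ABm a b)) :
    Infinite (Subsemigroup.closure ({a, b} : Set S)) :=
  Infinite.of_injective
    (fun n => ⟨ABm a b n, ABm_mem (Subsemigroup.subset_closure (by simp))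
      (Subsemigroup.subset_closure (by simp)) n⟩)
    fun _ _ hmn => h (congrArg Subtype.val hmn)

end AltProd

namespace FSemigroup

open Function

def of (i : Fin 2) : FSemigroup :=
  ((FreeSemigroup.of i : FreeSemigroup (Fin 2)) : (conGen FRel).Quotient)

theorem isIdempotentElem_of (i : Fin 2) : IsIdempotentElem (of i) :=
  (Con.eq _).2 <| ConGen.Rel.of _ _ <| by
    fin_cases i
    exacts [Or.inl ⟨rfl, rfl⟩, Or.inr ⟨rfl, rfl⟩]

theorem closure_of_eq_top : Subsemigroup.closure {of 0, of 1} = ⊤ := by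
  have hgen : ∀ i, of i ∈ Subsemigroup.closure {of 0, of 1} := fun i =>
    Subsemigroup.subset_closure (by fin_cases i <;> simp)
  refine eq_top_iff.2 fun u _ => Con.induction_on (C := (· ∈ _)) u fun w => ?_
  induction w with
  | ih1 i => exact hgen i
  | ih2 i w _ hw => exact mul_mem (hgen i) hw

theorem mem_range_altProd (u : FSemigroup) : u ∈ Set.range (altProd (of 0) (of 1)) :=
  closure_subset_range_altProd (isIdempotentElem_of 0) (isIdempotentElem_of 1)
    (by rw [closure_of_eq_top]; trivial)

variable {T : Type*} [Semigroup T] {a b : T} (ha : IsIdempotentElem a) (hb : IsIdempotentElem b)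
include ha hb

theorem conGen_le_ker : conGen FRel ≤ Con.ker (FreeSemigroup.lift ![a, b]) := by
  refine Con.conGen_le.2 ?_
  rintro x y (⟨rfl, rfl⟩ | ⟨rfl, rfl⟩) <;> rw [Con.ker_rel, map_mul]
  exacts [ha, hb]

def lift : FSemigroup →ₙ* T where
  toFun u := Con.liftOn u (FreeSemigroup.lift ![a, b]) fun _ _ h => conGen_le_ker ha hb h
  map_mul' u v := Con.induction_on₂ u v fun _ _ => map_mul _ _ _

theorem lift_of_zero : lift ha hb (of 0) = a := rfl

theorem lift_of_one : lift ha hb (of 1) = b := rfl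

theorem lift_altProd (i : (ℕ ⊕ ℕ) ⊕ (ℕ ⊕ ℕ)) :
    lift ha hb (altProd (of 0) (of 1) i) = altProd a b i := by
  rw [map_altProd, lift_of_zero, lift_of_one]

theorem lift_injective (h : Injective (altProd a b)) : Injective (lift ha hb) := by
  intro u v huv
  obtain ⟨i, rfl⟩ := mem_range_altProd u
  obtain ⟨j, rfl⟩ := mem_range_altProd v
  rw [lift_altProd, lift_altProd] at huv
  rw [h huv]

theorem srange_lift : (lift ha hb).srange = Subsemigroup.closure {a, b} := by
  rw [MulHom.srange_eq_map, ← closure_of_eq_top, MulHom.map_mclosure, Set.image_pair,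
    lift_of_zero, lift_of_one]

noncomputable def mulEquivClosure (h : Injective (altProd a b)) :
    FSemigroup ≃* Subsemigroup.closure ({a, b} : Set T) :=
  (MulEquiv.ofBijective (lift ha hb).srangeRestrict
    ⟨fun _ _ huv => lift_injective ha hb h (congrArg Subtype.val huv),
      (lift ha hb).srangeRestrict_surjective⟩).trans
    (MulEquiv.subsemigroupCongr (srange_lift ha hb))

end FSemigroup

/-- If `a, b` are noncommuting idempotents of an amiable semigroup avoiding `M`,
then the elements `(ab)^m, (ba)^m (m ≥ 1)`, `(ab)^n a, (ba)^n b (n ≥ 0)` are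
pairwise distinct; hence the subsemigroup generated by `a` and `b` is infinite
and isomorphic to `F = ⟨a, b ∣ a² = a, b² = b⟩`. -/
theorem generates_copy_of_F {S : Type*} [Semigroup S] (hS : IsAmiable S) (hM : AvoidsM S)
    (a b : S) (ha : a * a = a) (hb : b * b = b) (hne : a * b ≠ b * a) :
    PairwiseDistinctF a b ∧
    Infinite (Subsemigroup.closure ({a, b} : Set S)) ∧
    Nonempty (FSemigroup ≃* (Subsemigroup.closure ({a, b} : Set S))) := by
  have hab := hS.ABm_injective hM ha hb hne
  have hF := pairwiseDistinctF_of_injective ha hb hab (hS.ABm_injective hM hb ha hne.symm)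
  exact ⟨hF, infinite_closure_of_injective hab,
    ⟨FSemigroup.mulEquivClosure ha hb hF.injective_altProd⟩⟩
end

section
/- Let S be an amiable semigroup which avoids M and let a, b ∈ S be idempotents with ab ≠ ba. Then (ab)^m ≠ (ba)^n b for all integers m ≥ 1 and n ≥ 0 (where (ba)^0 b = b), and also (ab)^m ≠ (ba)^n for all integers m, n ≥ 1. -/
namespace AmiableAux

variable {S : Type*} [Semigroup S]

/-! ### Basic facts about `LStar` and `RStar` -/

lemma lstar_refl (x : S) : LStar x x := fun _ _ => Iff.rfl

lemma rstar_refl (x : S) : RStar x x := fun _ _ => Iff.rfl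

lemma lstar_trans {x y z : S} (h1 : LStar x y) (h2 : LStar y z) : LStar x z :=
  fun u v => (h1 u v).trans (h2 u v)

lemma lstar_cancel {x e : S} (h : LStar x e) {u v : S} (hx : x * u = x * v) :
    e * u = e * v := by
  have h2 := (h (u : WithOne S) (v : WithOne S)).mp
    (by rw [← WithOne.coe_mul, ← WithOne.coe_mul, hx])
  rwa [← WithOne.coe_mul, ← WithOne.coe_mul, WithOne.coe_inj] at h2

lemma lstar_cancel_one {x e : S} (h : LStar x e) {u : S} (hx : x * u = x) :
    e * u = e := by
  have h2 := (h (u : WithOne S) 1).mp (by rw [mul_one, ← WithOne.coe_mul, hx])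
  rwa [mul_one, ← WithOne.coe_mul, WithOne.coe_inj] at h2

lemma lstar_fix {x e : S} (h : LStar x e) (he : e * e = e) : x * e = x := by
  have h2 := (h (e : WithOne S) 1).mpr (by rw [mul_one, ← WithOne.coe_mul, he])
  rwa [mul_one, ← WithOne.coe_mul, WithOne.coe_inj] at h2

/-- If `e*f = e` and `f*e = f` then `e 𝓛 f`, hence `e 𝓛* f`. -/
lemma lstar_of_dominates {e f : S} (hef : e * f = e) (hfe : f * e = f) : LStar e f := by
  have k1 : ∀ u : WithOne S, (f : WithOne S) * u = (f : WithOne S) * ((e : WithOne S) * u) :=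
    fun u => by rw [← mul_assoc, ← WithOne.coe_mul, hfe]
  have k2 : ∀ u : WithOne S, (e : WithOne S) * u = (e : WithOne S) * ((f : WithOne S) * u) :=
    fun u => by rw [← mul_assoc, ← WithOne.coe_mul, hef]
  exact fun u v => ⟨fun h => by rw [k1 u, k1 v, h], fun h => by rw [k2 u, k2 v, h]⟩

/-- If `e*f = f` and `f*e = e` then `e 𝓡 f`, hence `e 𝓡* f`. -/
lemma rstar_of_dominates {e f : S} (hef : e * f = f) (hfe : f * e = e) : RStar e f := by
  have k1 : ∀ u : WithOne S, u * (f : WithOne S) = (u * (e : WithOne S)) * (f : WithOne S) :=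
    fun u => by rw [mul_assoc, ← WithOne.coe_mul, hef]
  have k2 : ∀ u : WithOne S, u * (e : WithOne S) = (u * (f : WithOne S)) * (e : WithOne S) :=
    fun u => by rw [mul_assoc, ← WithOne.coe_mul, hfe]
  exact fun u v => ⟨fun h => by rw [k1 u, k1 v, h], fun h => by rw [k2 u, k2 v, h]⟩

/-- Two idempotents in the `𝓛*`-class of `x` coincide; here `f` is `𝓛`-below-and-above `e`. -/
lemma l_uniq (hS : IsAmiable S) {x e f : S} (hxe : LStar x e)
    (he : e * e = e) (hf : f * f = f) (hef : e * f = e) (hfe : f * e = f) : e = f :=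
  (hS.1 x).unique ⟨he, hxe⟩ ⟨hf, lstar_trans hxe (lstar_of_dominates hef hfe)⟩

/-- Two `𝓡`-equivalent idempotents coincide in an amiable semigroup. -/
lemma r_uniq (hS : IsAmiable S) {e f : S}
    (he : e * e = e) (hf : f * f = f) (hef : e * f = f) (hfe : f * e = e) : e = f :=
  (hS.2 e).unique ⟨he, rstar_refl e⟩ ⟨hf, rstar_of_dominates hef hfe⟩

/-! ### Finding a copy of `M` -/

/-- If `A`, `B` are idempotents with `ABA = AB = BAB` and `AB ≠ BA`, then
`{A, B, AB, BA}` is a copy of `M`. -/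
lemma fact1 (hM : AvoidsM S) {A B : S} (hA : A * A = A) (hB : B * B = B)
    (h1 : A * B * A = A * B) (h2 : B * A * B = A * B) (hne : A * B ≠ B * A) : False := by
  apply hM
  refine ⟨A, B, A * B, B * A, ⟨?_, ?_, ?_, ?_, ?_, hne⟩,
    hA, rfl, ?_, ?_, rfl, hB, ?_, ?_, h1, ?_, ?_, ?_, ?_, h2, ?_, ?_⟩
  -- A ≠ B
  · exact fun h => hne (by rw [h])
  -- A ≠ A*B
  · intro h
    apply hne
    have hx : B * A = B * (A * B) := by rw [← h]
    rw [hx, ← mul_assoc, h2]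
  -- A ≠ B*A
  · intro h
    apply hne
    have e1 : A * B = A := by
      calc A * B = A * B * A := h1.symm
        _ = A * (B * A) := mul_assoc _ _ _
        _ = A * A := by rw [← h]
        _ = A := hA
    rw [e1]; exact h
  -- B ≠ A*B
  · intro h
    apply hne
    have hx : B * A = (A * B) * A := by rw [← h]
    rw [hx, h1]
  -- B ≠ B*A
  · intro h
    apply hne
    have e1 : A * B = B := by
      calc A * B = B * A * B := h2.symm
        _ = B * B := by rw [← h]
        _ = B := hB
    rw [e1]; exact h
  -- A*(A*B) = A*B
  · rw [← mul_assoc, hA]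
  -- A*(B*A) = A*B
  · rw [← mul_assoc]; exact h1
  -- B*(A*B) = A*B
  · rw [← mul_assoc]; exact h2
  -- B*(B*A) = B*A
  · rw [← mul_assoc, hB]
  -- (A*B)*B = A*B
  · rw [mul_assoc, hB]
  -- (A*B)*(A*B) = A*B
  · rw [← mul_assoc, h1, mul_assoc, hB]
  -- (A*B)*(B*A) = A*B
  · rw [← mul_assoc, mul_assoc A B B, hB]; exact h1
  -- (B*A)*A = B*A
  · rw [mul_assoc, hA]
  -- (B*A)*(A*B) = A*B
  · rw [← mul_assoc, mul_assoc B A A, hA]; exact h2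
  -- (B*A)*(B*A) = A*B
  · rw [← mul_assoc, h2]; exact h1

/-! ### The key lemma -/

/-- Key lemma: if `x` is fixed on the right by the idempotent `u`, killed (to `g`)
on the right by the idempotent `w`, where `g` is a suitable idempotent with
`z*x = g` for some `z`, then there is an idempotent `e` with
`x*e = x`, `u*e = e`, `w*e = g` (using amiability and avoidance of `M`). -/
lemma key (hS : IsAmiable S) (hM : AvoidsM S) {u w g x z : S}
    (hw : w * w = w) (hg : g * g = g) (hwg : w * g = g)
    (hxu : x * u = x) (hxw : x * w = g) (hxg : x * g = g) (hzx : z * x = g) :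
    ∃ e : S, e * e = e ∧ x * e = x ∧ u * e = e ∧ w * e = g := by
  obtain ⟨e, ⟨hee, hLxe⟩, -⟩ := hS.1 x
  have hxe : x * e = x := lstar_fix hLxe hee
  have heu : e * u = e := lstar_cancel_one hLxe hxu
  have hewg : e * w = e * g := lstar_cancel hLxe (by rw [hxw, hxg])
  -- y := u*e is an idempotent 𝓛-equivalent to e
  have hye : (u * e) * e = u * e := by rw [mul_assoc, hee]
  have hyy : (u * e) * (u * e) = u * e := by
    rw [mul_assoc u e (u * e), ← mul_assoc e u e, heu, hee]
  have hxy : x * (u * e) = x := by rw [← mul_assoc, hxu, hxe]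
  have hey : e * (u * e) = e := lstar_cancel_one hLxe hxy
  have heuy : e = u * e := l_uniq hS hLxe hee hyy hey hye
  have hue : u * e = e := heuy.symm
  -- g*e = g
  have hge : g * e = g := by rw [← hzx, mul_assoc, hxe]
  -- e*g is an idempotent 𝓛-equivalent to g
  have hegeg : (e * g) * (e * g) = e * g := by
    rw [mul_assoc e g (e * g), ← mul_assoc g e g, hge, hg]
  have hgeg : g * (e * g) = g := by rw [← mul_assoc, hge, hg]
  have hegg : (e * g) * g = e * g := by rw [mul_assoc, hg]
  have heg : e * g = g := (l_uniq hS (lstar_refl g) hg hegeg hgeg hegg).symm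
  have hew : e * w = g := by rw [hewg, heg]
  by_cases hwe : w * e = g
  · exact ⟨e, hee, hxe, hue, hwe⟩
  · exfalso
    refine fact1 hM hee hw ?_ ?_ ?_
    · rw [hew, hge]
    · rw [mul_assoc, hew, hwg]
    · rw [hew]; exact fun hh => hwe hh.symm

/-! ### Word lemmas for alternating products -/

/-- `a * ((ba)^n b) = (ab)^(n+1)` -/
lemma aS (a b : S) : ∀ n, a * ABa b a n = ABm a b n
  | 0 => rfl
  | n + 1 => by
    show a * ((b * a) * ABa b a n) = (a * b) * ABm a b n
    rw [← aS a b n]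
    simp only [← mul_assoc]

/-- `b * (ab)^(n+1) = (ba)^(n+1) b` -/
lemma bP (a b : S) : ∀ n, b * ABm a b n = ABa b a (n + 1)
  | 0 => (mul_assoc b a b).symm
  | n + 1 => by
    show b * ((a * b) * ABm a b n) = (b * a) * ABa b a (n + 1)
    rw [← bP a b n]
    simp only [← mul_assoc]

/-- `(ab)^(n+1) * b = (ab)^(n+1)` when `b` is idempotent -/
lemma Pb (a b : S) (hb : b * b = b) : ∀ n, ABm a b n * b = ABm a b n
  | 0 => by show (a * b) * b = a * b; rw [mul_assoc, hb]
  | n + 1 => by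
    show ((a * b) * ABm a b n) * b = (a * b) * ABm a b n
    rw [mul_assoc, Pb a b hb n]

/-- `a * (ab)^(n+1) = (ab)^(n+1)` when `a` is idempotent -/
lemma aP (a b : S) (ha : a * a = a) : ∀ n, a * ABm a b n = ABm a b n
  | 0 => by show a * (a * b) = a * b; rw [← mul_assoc, ha]
  | n + 1 => by
    show a * ((a * b) * ABm a b n) = (a * b) * ABm a b n
    simp only [← mul_assoc]
    rw [ha]

/-- `b * ((ba)^n b) = (ba)^n b` when `b` is idempotent -/
lemma bS (a b : S) (hb : b * b = b) : ∀ n, b * ABa b a n = ABa b a n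
  | 0 => hb
  | n + 1 => by
    show b * ((b * a) * ABa b a n) = (b * a) * ABa b a n
    simp only [← mul_assoc]
    rw [hb]

/-- `((ba)^n b) * a = (ba)^(n+1)` -/
lemma Sa (a b : S) : ∀ n, ABa b a n * a = ABm b a n
  | 0 => rfl
  | n + 1 => by
    show ((b * a) * ABa b a n) * a = (b * a) * ABm b a n
    rw [mul_assoc, Sa a b n]

/-- `(ba)^(n+1) * b = (ba)^(n+1) b` -/
lemma Qb (a b : S) : ∀ n, ABm b a n * b = ABa b a (n + 1)
  | 0 => rfl
  | n + 1 => by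
    show ((b * a) * ABm b a n) * b = (b * a) * ABa b a (n + 1)
    rw [mul_assoc, Qb a b n]

/-- `((ba)^n b) * b = (ba)^n b` when `b` is idempotent -/
lemma Sb (a b : S) (hb : b * b = b) : ∀ n, ABa b a n * b = ABa b a n
  | 0 => hb
  | n + 1 => by
    show ((b * a) * ABa b a n) * b = (b * a) * ABa b a n
    rw [mul_assoc, Sb a b hb n]

/-- `(ba)^i b * (ba)^j b = (ba)^(i+j) b` when `b` is idempotent -/
lemma SS (a b : S) (hb : b * b = b) : ∀ i j, ABa b a i * ABa b a j = ABa b a (i + j)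
  | 0, j => by
    show b * ABa b a j = ABa b a (0 + j)
    rw [Nat.zero_add]; exact bS a b hb j
  | i + 1, j => by
    show ((b * a) * ABa b a i) * ABa b a j = ABa b a (i + 1 + j)
    rw [mul_assoc, SS a b hb i j, Nat.succ_add]
    rfl

/-- absorption: `(ba)^(n+1) * g = g` when `a*g = g`, `b*g = g` -/
lemma absQ (a b : S) {g : S} (hag : a * g = g) (hbg : b * g = g) :
    ∀ n, ABm b a n * g = g
  | 0 => by show (b * a) * g = g; rw [mul_assoc, hag, hbg]
  | n + 1 => by
    show ((b * a) * ABm b a n) * g = g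
    rw [mul_assoc, absQ a b hag hbg n, mul_assoc, hag, hbg]

/-- absorption: `((ba)^n b) * g = g` when `a*g = g`, `b*g = g` -/
lemma absS (a b : S) {g : S} (hag : a * g = g) (hbg : b * g = g) :
    ∀ n, ABa b a n * g = g
  | 0 => hbg
  | n + 1 => by
    show ((b * a) * ABa b a n) * g = g
    rw [mul_assoc, absS a b hag hbg n, mul_assoc, hag, hbg]

/-- descent: `(ba)^(n+1) * e = g` when `a*e = e`, `b*e = g` -/
lemma desc1 (a b : S) {e g : S} (hae : a * e = e) (hbe : b * e = g)
    (hag : a * g = g) (hbg : b * g = g) : ∀ n, ABm b a n * e = g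
  | 0 => by show (b * a) * e = g; rw [mul_assoc, hae, hbe]
  | n + 1 => by
    show ((b * a) * ABm b a n) * e = g
    rw [mul_assoc, desc1 a b hae hbe hag hbg n, mul_assoc, hag, hbg]

/-- descent: `((ba)^(n+1) b) * e = g` when `b*e = e`, `a*e = g` -/
lemma desc2 (a b : S) {e g : S} (hbe : b * e = e) (hae : a * e = g)
    (hag : a * g = g) (hbg : b * g = g) : ∀ n, ABa b a (n + 1) * e = g
  | 0 => by
    show ((b * a) * b) * e = g
    rw [mul_assoc, hbe, mul_assoc, hae, hbg]
  | n + 1 => by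
    show ((b * a) * ABa b a (n + 1)) * e = g
    rw [mul_assoc, desc2 a b hbe hae hag hbg n, mul_assoc, hag, hbg]

/-! ### The mutual induction -/

/-- The heart of the argument: if `g` is an idempotent absorbing `a` and `b` on both
sides, then no `(ba)^k b` nor `(ba)^(k+1)` can equal `g`. -/
lemma mainAB (hS : IsAmiable S) (hM : AvoidsM S) {a b : S}
    (ha : a * a = a) (hb : b * b = b) (hne : a * b ≠ b * a) {g : S}
    (hg : g * g = g) (hag : a * g = g) (hga : g * a = g)
    (hbg : b * g = g) (hgb : g * b = g) :
    ∀ j, (ABa b a j = g → False) ∧ (ABm b a j = g → False) := by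
  intro j
  induction j with
  | zero =>
    constructor
    · intro h
      have h' : b = g := h
      exact hne (by rw [h', hag, hga])
    · intro h
      have h' : b * a = g := h
      refine fact1 hM hb ha ?_ ?_ (fun hh => hne hh.symm)
      · rw [h', hgb]
      · rw [mul_assoc, h', hag]
  | succ j ih =>
    have hB : ABa b a (j + 1) = g → False := by
      intro h
      -- x := (ba)^(j+1) = ABm b a j ; u := a, w := b, z := b*a
      have hzx : (b * a) * ABm b a j = g := by
        show ABm b a (j + 1) = g
        rw [← Sa a b (j + 1), h, hga]
      obtain ⟨e, hee, hxe, hae, hbe⟩ :=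
        key hS hM (u := a) (w := b) (x := ABm b a j) (z := b * a)
          hb hg hbg (Pb b a ha j) ((Qb a b j).trans h) (absQ a b hag hbg j) hzx
      have hfin : ABm b a j = g := by
        rw [← hxe]; exact desc1 a b hae hbe hag hbg j
      exact ih.2 hfin
    refine ⟨hB, ?_⟩
    intro h
    -- x := (ba)^(j+1) b = ABa b a (j+1) ; u := b, w := a, z := b*a
    have hzx : (b * a) * ABa b a (j + 1) = g := by
      show ABa b a (j + 2) = g
      rw [← Qb a b (j + 1), h, hgb]
    obtain ⟨e, hee, hxe, hbe', hae'⟩ :=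
      key hS hM (u := b) (w := a) (x := ABa b a (j + 1)) (z := b * a)
        ha hg hag (Sb a b hb (j + 1)) ((Sa a b (j + 1)).trans h)
        (absS a b hag hbg (j + 1)) hzx
    have hfin : ABa b a (j + 1) = g := by
      rw [← hxe]; exact desc2 a b hbe' hae' hag hbg j
    exact hB hfin

/-! ### The main reductions -/

lemma part1 (hS : IsAmiable S) (hM : AvoidsM S) {a b : S}
    (ha : a * a = a) (hb : b * b = b) (hne : a * b ≠ b * a)
    (m n : ℕ) (hcontra : ABm a b m = ABa b a n) : False := by
  have hE : ABm a b n = ABa b a n := by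
    calc ABm a b n = a * ABa b a n := (aS a b n).symm
      _ = a * ABm a b m := by rw [← hcontra]
      _ = ABm a b m := aP a b ha m
      _ = ABa b a n := hcontra
  match n, hE with
  | 0, hE =>
    -- hE : a*b = b
    have hE0 : a * b = b := hE
    have hq : (b * a) * (b * a) = b * a := by
      have h1 : (b * a) * (b * a) = b * ((a * b) * a) := by simp only [← mul_assoc]
      rw [h1, hE0, ← mul_assoc, hb]
    have hef : b * (b * a) = b * a := by rw [← mul_assoc, hb]
    have hfe : (b * a) * b = b := by rw [mul_assoc, hE0, hb]
    have hba : b = b * a := r_uniq hS hb hq hef hfe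
    exact hne (hE0.trans hba)
  | Nat.succ n', hE =>
    -- hE : (ab)^(n'+2) = (ba)^(n'+1) b =: t
    have hbt : b * ABa b a (n' + 1) = ABa b a (n' + 1) := bS a b hb (n' + 1)
    have hat : a * ABa b a (n' + 1) = ABa b a (n' + 1) := (aS a b (n' + 1)).trans hE
    have hstab1 : ABa b a (n' + 2) = ABa b a (n' + 1) := by
      have hh := bP a b (n' + 1)
      rw [hE, hbt] at hh
      exact hh.symm
    have hstab : ∀ jj, ABa b a (n' + 1 + jj) = ABa b a (n' + 1) := by
      intro jj
      induction jj with
      | zero => rfl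
      | succ k ihk =>
        show ABa b a (n' + 1 + k + 1) = ABa b a (n' + 1)
        have e1 : ABa b a (n' + 1 + k + 1) = (b * a) * ABa b a (n' + 1 + k) := rfl
        rw [e1, ihk]
        exact hstab1
    have htt : ABa b a (n' + 1) * ABa b a (n' + 1) = ABa b a (n' + 1) := by
      rw [SS a b hb (n' + 1) (n' + 1)]
      exact hstab (n' + 1)
    -- G := ABm b a (n'+1) = (ba)^(n'+2) ; t := ABa b a (n'+1)
    have hGdef : ABa b a (n' + 1) * a = ABm b a (n' + 1) := Sa a b (n' + 1)
    have hGb : ABm b a (n' + 1) * b = ABa b a (n' + 1) := by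
      rw [Qb a b (n' + 1)]
      exact hstab1
    have haG : a * ABm b a (n' + 1) = ABm b a (n' + 1) := by
      rw [← hGdef, ← mul_assoc, hat]
    have hGa : ABm b a (n' + 1) * a = ABm b a (n' + 1) := Pb b a ha (n' + 1)
    have hbG : b * ABm b a (n' + 1) = ABm b a (n' + 1) := by
      rw [← hGdef, ← mul_assoc, hbt]
    have htG : ABa b a (n' + 1) * ABm b a (n' + 1) = ABm b a (n' + 1) := by
      rw [← hGdef, ← mul_assoc, htt]
    have hGG : ABm b a (n' + 1) * ABm b a (n' + 1) = ABm b a (n' + 1) := by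
      calc ABm b a (n' + 1) * ABm b a (n' + 1)
          = (ABa b a (n' + 1) * a) * ABm b a (n' + 1) := by rw [hGdef]
        _ = ABa b a (n' + 1) * (a * ABm b a (n' + 1)) := mul_assoc _ _ _
        _ = ABa b a (n' + 1) * ABm b a (n' + 1) := by rw [haG]
        _ = ABm b a (n' + 1) := htG
    have hGt : ABm b a (n' + 1) * ABa b a (n' + 1) = ABa b a (n' + 1) := by
      calc ABm b a (n' + 1) * ABa b a (n' + 1)
          = ABm b a (n' + 1) * (ABm b a (n' + 1) * b) := by rw [hGb]
        _ = (ABm b a (n' + 1) * ABm b a (n' + 1)) * b := (mul_assoc _ _ _).symm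
        _ = ABm b a (n' + 1) * b := by rw [hGG]
        _ = ABa b a (n' + 1) := hGb
    have htG' : ABa b a (n' + 1) = ABm b a (n' + 1) := r_uniq hS htt hGG htG hGt
    have hgb' : ABm b a (n' + 1) * b = ABm b a (n' + 1) := hGb.trans htG'
    exact (mainAB hS hM ha hb hne hGG haG hGa hbG hgb' (n' + 1)).1 htG'

lemma part2 (hS : IsAmiable S) (hM : AvoidsM S) {a b : S}
    (ha : a * a = a) (hb : b * b = b) (hne : a * b ≠ b * a)
    (m n : ℕ) (hcontra : ABm a b m = ABm b a n) : False := by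
  refine part1 hS hM ha hb hne m (n + 1) ?_
  calc ABm a b m = ABm a b m * b := (Pb a b hb m).symm
    _ = ABm b a n * b := by rw [hcontra]
    _ = ABa b a (n + 1) := Qb a b n

end AmiableAux

/-- If `a, b` are noncommuting idempotents of an amiable semigroup avoiding `M`,
then `(ab)^m ≠ (ba)^n b` for all `m ≥ 1`, `n ≥ 0`, and `(ab)^m ≠ (ba)^n` for all
`m, n ≥ 1`.  (Here `ABm a b m' = (ab)^(m'+1)` and `ABa b a n = (ba)^n b`.) -/
theorem pow_ab_ne_pow_ba_mul_b_and_pow_ba {S : Type*} [Semigroup S]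
    (hS : IsAmiable S) (hM : AvoidsM S)
    (a b : S) (ha : a * a = a) (hb : b * b = b) (hne : a * b ≠ b * a) :
    (∀ m n : ℕ, ABm a b m ≠ ABa b a n) ∧ (∀ m n : ℕ, ABm a b m ≠ ABm b a n) := by
  constructor
  · exact fun m n h => AmiableAux.part1 hS hM ha hb hne m n h
  · exact fun m n h => AmiableAux.part2 hS hM ha hb hne m n h
end
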